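/- In the multi-parameter 2×2 quantum matrix algebra O_{q,P,Q}(M(2)) over K = ℚ(q, p21, q21), the quantum determinant det_q = Z11·Z22 − q21^{−2} Z12·Z21 satisfies det_q·Z12 = q^2 p21^2 q21^{−2} Z12·det_q and Z21·det_q = q^2 p21^2 q21^{−2} det_q·Z21. -/
import Mathlib


noncomputable section

/-- The field K = ℚ(q, p21, q21) of rational functions in three variables. -/
abbrev K : Type := FractionRing (MvPolynomial (Fin 3) ℚ)

def q : K := algebraMap (MvPolynomial (Fin 3) ℚ) K (MvPolynomial.X 0)
def p21 : K := algebraMap (MvPolynomial (Fin 3) ℚ) K (MvPolynomial.X 1)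
def q21 : K := algebraMap (MvPolynomial (Fin 3) ℚ) K (MvPolynomial.X 2)

/-- Generators of the 2×2 quantum matrix algebra. -/
inductive Gen : Type | z11 | z12 | z21 | z22

open Gen

/-- The generators viewed in the free algebra. -/
def ι : Gen → FreeAlgebra K Gen := FreeAlgebra.ι K

/-- The defining relations of the multi-parameter 2×2 quantum matrix algebra
O_{q,P,Q}(M(2)). -/
inductive QRel : FreeAlgebra K Gen → FreeAlgebra K Gen → Prop
  | r1 : QRel (ι z22 * ι z11)
      ((p21 ^ 2 * q21 ^ 2) • (ι z11 * ι z22) + ((q ^ 2 - 1) * p21 ^ 2) • (ι z12 * ι z21))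
  | r2 : QRel (ι z22 * ι z21) ((q21 ^ 2) • (ι z21 * ι z22))
  | r3 : QRel (ι z12 * ι z11) ((q21 ^ 2) • (ι z11 * ι z12))
  | r4 : QRel (ι z22 * ι z12) ((q ^ 2 * p21 ^ 2) • (ι z12 * ι z22))
  | r5 : QRel (ι z21 * ι z12) ((q ^ 2 * p21 ^ 2 * q21 ^ (-2 : ℤ)) • (ι z12 * ι z21))
  | r6 : QRel (ι z21 * ι z11) ((q ^ 2 * p21 ^ 2) • (ι z11 * ι z21))

/-- The multi-parameter 2×2 quantum matrix algebra O_{q,P,Q}(M(2)). -/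
abbrev O : Type := RingQuot QRel

/-- The images of the generators in O. -/
def Z (g : Gen) : O := RingQuot.mkAlgHom K QRel (ι g)

/-- The quantum determinant det_q = Z11·Z22 − q21⁻²·Z12·Z21. -/
def detq : O := Z z11 * Z z22 - (q21 ^ (-2 : ℤ)) • (Z z12 * Z z21)


section Aux
open Gen

lemma relE {x y : FreeAlgebra K Gen} (h : QRel x y) :
    RingQuot.mkAlgHom K QRel x = RingQuot.mkAlgHom K QRel y :=
  RingQuot.mkAlgHom_rel K h

lemma rel2 : Z z22 * Z z21 = (q21 ^ 2) • (Z z21 * Z z22) := by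
  simpa [Z, map_mul, map_smul] using relE QRel.r2

lemma rel3 : Z z12 * Z z11 = (q21 ^ 2) • (Z z11 * Z z12) := by
  simpa [Z, map_mul, map_smul] using relE QRel.r3

lemma rel4 : Z z22 * Z z12 = (q ^ 2 * p21 ^ 2) • (Z z12 * Z z22) := by
  simpa [Z, map_mul, map_smul] using relE QRel.r4

lemma rel5 : Z z21 * Z z12 = (q ^ 2 * p21 ^ 2 * q21 ^ (-2 : ℤ)) • (Z z12 * Z z21) := by
  simpa [Z, map_mul, map_smul] using relE QRel.r5

lemma rel6 : Z z21 * Z z11 = (q ^ 2 * p21 ^ 2) • (Z z11 * Z z21) := by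
  simpa [Z, map_mul, map_smul] using relE QRel.r6

lemma rel2' (x : O) : Z z22 * (Z z21 * x) = (q21 ^ 2) • (Z z21 * (Z z22 * x)) := by
  rw [← mul_assoc, rel2, smul_mul_assoc, mul_assoc]

lemma rel3' (x : O) : Z z12 * (Z z11 * x) = (q21 ^ 2) • (Z z11 * (Z z12 * x)) := by
  rw [← mul_assoc, rel3, smul_mul_assoc, mul_assoc]

lemma rel4' (x : O) : Z z22 * (Z z12 * x) = (q ^ 2 * p21 ^ 2) • (Z z12 * (Z z22 * x)) := by
  rw [← mul_assoc, rel4, smul_mul_assoc, mul_assoc]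

lemma rel5' (x : O) :
    Z z21 * (Z z12 * x) = (q ^ 2 * p21 ^ 2 * q21 ^ (-2 : ℤ)) • (Z z12 * (Z z21 * x)) := by
  rw [← mul_assoc, rel5, smul_mul_assoc]; rw [mul_assoc (Z z12)]

lemma rel6' (x : O) : Z z21 * (Z z11 * x) = (q ^ 2 * p21 ^ 2) • (Z z11 * (Z z21 * x)) := by
  rw [← mul_assoc, rel6, smul_mul_assoc, mul_assoc]

lemma osub_mul (a b c : O) : (a - b) * c = a * c - b * c := sub_mul a b c
lemma omul_sub (a b c : O) : a * (b - c) = a * b - a * c := mul_sub a b c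
lemma osmul_sub (s : K) (a b : O) : s • (a - b) = s • a - s • b := smul_sub s a b

end Aux

/-- det_q·Z12 = q² p21² q21⁻² Z12·det_q and Z21·det_q = q² p21² q21⁻² det_q·Z21
in the multi-parameter 2×2 quantum matrix algebra. -/
theorem detq_q_commutes_offdiag :
    detq * Z z12 = (q ^ 2 * p21 ^ 2 * q21 ^ (-2 : ℤ)) • (Z z12 * detq) ∧
    Z z21 * detq = (q ^ 2 * p21 ^ 2 * q21 ^ (-2 : ℤ)) • (detq * Z z21) := by
  constructor <;>
  · simp only [detq, osub_mul, omul_sub, smul_mul_assoc, mul_smul_comm, osmul_sub,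
      mul_assoc, smul_smul, rel2, rel3, rel4, rel5, rel6, rel2', rel3', rel4', rel5', rel6']
    have h21 : q21 ≠ 0 := by
      simp only [q21, ne_eq, IsFractionRing.to_map_eq_zero_iff]
      exact MvPolynomial.X_ne_zero 2
    congr 1
    · congr 1
      rw [show ((q21:K) ^ (-2 : ℤ) * q21 ^ 2 = 1) by rw [← zpow_natCast q21 2, ← zpow_add₀ h21]; norm_num, mul_one]
    · congr 1
      ring
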